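/- Let X be a finite-dimensional Banach space, (Ω, Σ, μ) a probability space, and (Ψ_n) a uniformly bounded independent sequence of random convex bounded sets with expectations E(Ψ_n) = U_n. Then ρ_H( (1/n)∑_{i=1}^n Ψ_i(ω), (1/n)∑_{i=1}^n U_i ) → 0 almost everywhere. -/

import Mathlib

/-!
For a fixed unit functional `f`, the real variables `suppFn (Ψ i ω) f - suppFn (U i) f` are
coordinates of the independent Rådström embeddings, centred and uniformly bounded, so their
averages tend to `0` almost surely (the second moments of the averages along the squares `n²` are
summable, and the gaps between consecutive squares are short). Support functions of sets in a
fixed ball are uniformly Lipschitz in `f`, so almost sure convergence on a countable dense subset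
of the compact dual unit sphere upgrades to uniform convergence on the whole sphere. Support
functions turn Minkowski averages into averages, and by Hahn–Banach separation the Hausdorff
distance of two bounded convex sets is at most the uniform distance of their support functions on
that sphere.
-/

open Pointwise MeasureTheory

/-- The one-sided Hausdorff distance `ρ̄_H(A,B) = sup_{b ∈ B} inf_{a ∈ A} ‖a - b‖`. -/
noncomputable def rhoBar {X : Type*} [NormedAddCommGroup X] (A B : Set X) : ℝ :=
  ⨆ b : B, ⨅ a : A, ‖(a : X) - (b : X)‖

/-- The Hausdorff distance. -/
noncomputable def rhoH {X : Type*} [NormedAddCommGroup X] (A B : Set X) : ℝ :=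
  max (rhoBar A B) (rhoBar B A)

/-- The support function `R(A)(x*) = sup_{a ∈ A} x*(a)`. -/
noncomputable def suppFn {X : Type*} [NormedAddCommGroup X] [NormedSpace ℝ X]
    (A : Set X) (f : X →L[ℝ] ℝ) : ℝ :=
  ⨆ a : A, f a

/-- The unit sphere of the dual space `X*`. -/
def DualSphere (X : Type*) [NormedAddCommGroup X] [NormedSpace ℝ X] :=
  {f : X →L[ℝ] ℝ // ‖f‖ = 1}

/-- The Rådström embedding of a set, viewed as the family of values of its support
function on the dual unit sphere. -/
noncomputable def Rad {X : Type*} [NormedAddCommGroup X] [NormedSpace ℝ X]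
    (A : Set X) : DualSphere X → ℝ :=
  fun f => suppFn A f.1

/-- `‖A‖ = sup_{a ∈ A} ‖a‖`. -/
noncomputable def setNorm {X : Type*} [NormedAddCommGroup X] (A : Set X) : ℝ :=
  ⨆ a : A, ‖(a : X)‖

open Bornology Metric ProbabilityTheory Filter Finset Topology
open scoped NNReal

section FinsetSum

variable {ι : Type*} {s : Finset ι}

lemma nonempty_finsetSum {α : Type*} [AddCommMonoid α] {A : ι → Set α}
    (h : ∀ i ∈ s, (A i).Nonempty) : (∑ i ∈ s, A i).Nonempty := by
  induction s using Finset.cons_induction with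
  | empty => exact Set.zero_nonempty
  | cons j s hj ih =>
    rw [sum_cons]
    exact (h j (mem_cons_self j s)).add (ih fun i hi => h i (mem_cons_of_mem hi))

lemma isBounded_finsetSum {E : Type*} [SeminormedAddCommGroup E] {A : ι → Set E}
    (h : ∀ i ∈ s, IsBounded (A i)) : IsBounded (∑ i ∈ s, A i) := by
  induction s using Finset.cons_induction with
  | empty => exact isBounded_singleton
  | cons j s hj ih =>
    rw [sum_cons]
    exact (h j (mem_cons_self j s)).add (ih fun i hi => h i (mem_cons_of_mem hi))

lemma nonempty_isBounded_convex_smul_finsetSum {E : Type*} [SeminormedAddCommGroup E]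
    [NormedSpace ℝ E] {A : ι → Set E} (c : ℝ)
    (h : ∀ i ∈ s, (A i).Nonempty ∧ IsBounded (A i) ∧ Convex ℝ (A i)) :
    (c • ∑ i ∈ s, A i).Nonempty ∧ IsBounded (c • ∑ i ∈ s, A i) ∧ Convex ℝ (c • ∑ i ∈ s, A i) :=
  ⟨(nonempty_finsetSum fun i hi => (h i hi).1).smul_set,
    (isBounded_finsetSum fun i hi => (h i hi).2.1).smul₀ c,
    (convex_sum A fun i hi => (h i hi).2.2).smul c⟩

lemma lipschitzWith_average {α : Type*} [PseudoMetricSpace α] {F : ι → α → ℝ} {K : ℝ≥0}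
    (hF : ∀ i ∈ s, LipschitzWith K (F i)) :
    LipschitzWith K fun x => (#s : ℝ)⁻¹ * ∑ i ∈ s, F i x := by
  refine LipschitzWith.of_dist_le_mul fun x y => ?_
  rw [Real.dist_eq, ← mul_sub, ← sum_sub_distrib, abs_mul, abs_inv, Nat.abs_cast]
  calc (#s : ℝ)⁻¹ * |∑ i ∈ s, (F i x - F i y)| ≤ (#s : ℝ)⁻¹ * (#s * (K * dist x y)) := by
        gcongr
        refine (abs_sum_le_sum_abs _ _).trans ?_
        rw [← nsmul_eq_mul, ← sum_const]
        exact sum_le_sum fun i hi => (hF i hi).dist_le_mul x y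
    _ ≤ K * dist x y := by
        rw [← mul_assoc]
        exact mul_le_of_le_one_left (by positivity) (inv_mul_le_one_of_le₀ le_rfl (by positivity))

end FinsetSum

theorem tendstoUniformlyOn_of_lipschitzWith_of_subset_closure {E β ι : Type*}
    [PseudoMetricSpace E] [PseudoMetricSpace β] {l : Filter ι} {F : ι → E → β} {f : E → β}
    {K : ℝ≥0} (hF : ∀ i, LipschitzWith K (F i)) (hf : Continuous f) {S T : Set E}
    (hS : IsCompact S) (hST : S ⊆ closure T) (hT : ∀ t ∈ T, Tendsto (F · t) l (𝓝 (f t))) :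
    TendstoUniformlyOn F f l S := by
  have hequi : Equicontinuous F := (LipschitzWith.uniformEquicontinuous F K hF).equicontinuous
  have hpt : ∀ x ∈ S, Tendsto (F · x) l (𝓝 (f x)) := fun x hx =>
    closure_minimal hT (hequi.isClosed_setOfPred_tendsto hf) (hST hx)
  have := (EquicontinuousOn.tendsto_uniformOnFun_iff_pi' (𝔖 := {S}) (by simpa using hS)
    (by simpa using hequi.equicontinuousOn S) l f).2 ?_
  · rw [UniformOnFun.tendsto_iff_tendstoUniformlyOn] at this
    exact this S rfl
  · rw [Set.sUnion_singleton, tendsto_pi_nhds]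
    exact fun x => hpt x x.2

section SupportFunction

variable {X : Type*} [NormedAddCommGroup X] [NormedSpace ℝ X] {A B : Set X}

lemma suppFn_eq_sSup_image (A : Set X) (f : X →L[ℝ] ℝ) : suppFn A f = sSup (f '' A) :=
  sSup_image'.symm

lemma bddAbove_image_of_isBounded (hA : IsBounded A) (f : X →L[ℝ] ℝ) : BddAbove (f '' A) :=
  (f.lipschitz.isBounded_image hA).bddAbove

lemma le_suppFn (hA : IsBounded A) {a : X} (ha : a ∈ A) (f : X →L[ℝ] ℝ) : f a ≤ suppFn A f := by
  rw [suppFn_eq_sSup_image]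
  exact le_csSup (bddAbove_image_of_isBounded hA f) (Set.mem_image_of_mem f ha)

lemma suppFn_le (hA : A.Nonempty) {f : X →L[ℝ] ℝ} {M : ℝ} (h : ∀ a ∈ A, f a ≤ M) :
    suppFn A f ≤ M := by
  rw [suppFn_eq_sSup_image]
  exact csSup_le (hA.image f) (Set.forall_mem_image.2 h)

lemma suppFn_zero_right (hA : A.Nonempty) : suppFn A 0 = 0 := by
  rw [suppFn_eq_sSup_image, FunLike.coe_zero, Pi.zero_def, hA.image_const, csSup_singleton]

lemma suppFn_add (hA : A.Nonempty) (hAb : IsBounded A) (hB : B.Nonempty) (hBb : IsBounded B)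
    (f : X →L[ℝ] ℝ) : suppFn (A + B) f = suppFn A f + suppFn B f := by
  simp only [suppFn_eq_sSup_image, Set.image_add]
  exact csSup_add (hA.image f) (bddAbove_image_of_isBounded hAb f) (hB.image f)
    (bddAbove_image_of_isBounded hBb f)

lemma suppFn_smul {c : ℝ} (hc : 0 ≤ c) (A : Set X) (f : X →L[ℝ] ℝ) :
    suppFn (c • A) f = c * suppFn A f := by
  rw [suppFn_eq_sSup_image, image_smul_set, Real.sSup_smul_of_nonneg hc,
    suppFn_eq_sSup_image, smul_eq_mul]

lemma suppFn_finsetSum {ι : Type*} {s : Finset ι} {A : ι → Set X}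
    (hne : ∀ i ∈ s, (A i).Nonempty) (hb : ∀ i ∈ s, IsBounded (A i)) (f : X →L[ℝ] ℝ) :
    suppFn (∑ i ∈ s, A i) f = ∑ i ∈ s, suppFn (A i) f := by
  induction s using Finset.cons_induction with
  | empty => simp [suppFn_eq_sSup_image]
  | cons j s hj ih =>
    have hne' : ∀ i ∈ s, (A i).Nonempty := fun i hi => hne i (mem_cons_of_mem hi)
    have hb' : ∀ i ∈ s, IsBounded (A i) := fun i hi => hb i (mem_cons_of_mem hi)
    rw [sum_cons, sum_cons, suppFn_add (hne j (mem_cons_self j s)) (hb j (mem_cons_self j s))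
      (nonempty_finsetSum hne') (isBounded_finsetSum hb'), ih hne' hb']

lemma suppFn_smul_finsetSum {ι : Type*} {s : Finset ι} {A : ι → Set X} {c : ℝ} (hc : 0 ≤ c)
    (hne : ∀ i ∈ s, (A i).Nonempty) (hb : ∀ i ∈ s, IsBounded (A i)) (f : X →L[ℝ] ℝ) :
    suppFn (c • ∑ i ∈ s, A i) f = c * ∑ i ∈ s, suppFn (A i) f := by
  rw [suppFn_smul hc, suppFn_finsetSum hne hb]

lemma lipschitzWith_suppFn {C : ℝ≥0} (hA : A.Nonempty) (hAC : A ⊆ closedBall 0 C) :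
    LipschitzWith C (suppFn A) := by
  have hAb : IsBounded A := isBounded_closedBall.subset hAC
  refine LipschitzWith.of_le_add_mul C fun f g => suppFn_le hA fun a ha => ?_
  have hdiff : (f - g) a ≤ ‖f - g‖ * C :=
    (le_abs_self _).trans (((f - g).le_opNorm a).trans (by gcongr; simpa using hAC ha))
  rw [sub_apply] at hdiff
  rw [dist_eq_norm]
  linarith [le_suppFn hAb ha g]

lemma abs_suppFn_le {C : ℝ≥0} (hA : A.Nonempty) (hAC : A ⊆ closedBall 0 C)
    (f : X →L[ℝ] ℝ) : |suppFn A f| ≤ C * ‖f‖ := by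
  simpa [suppFn_zero_right hA, Real.dist_eq] using (lipschitzWith_suppFn hA hAC).dist_le_mul f 0

lemma subset_closedBall_of_suppFn_le {C : ℝ} (hC : 0 ≤ C) (hA : IsBounded A)
    (h : ∀ f : X →L[ℝ] ℝ, suppFn A f ≤ C * ‖f‖) : A ⊆ closedBall 0 C := by
  intro a ha
  obtain ⟨g, hg, hga⟩ := exists_dual_vector'' ℝ a
  have hga : g a = ‖a‖ := by simpa using hga
  rw [mem_closedBall_zero_iff, ← hga]
  calc g a ≤ suppFn A g := le_suppFn hA ha g
    _ ≤ C * ‖g‖ := h g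
    _ ≤ C := mul_le_of_le_one_right hC hg

end SupportFunction

lemma rhoBar_eq_iSup_infDist {X : Type*} [NormedAddCommGroup X] (A B : Set X) :
    rhoBar A B = ⨆ b : B, infDist (b : X) A := by
  simp only [rhoBar, infDist_eq_iInf, dist_eq_norm, norm_sub_rev]

lemma rhoH_nonneg {X : Type*} [NormedAddCommGroup X] (A B : Set X) : 0 ≤ rhoH A B := by
  refine le_max_of_le_left ?_
  rw [rhoBar_eq_iSup_infDist]
  exact Real.iSup_nonneg fun _ => infDist_nonneg

lemma ContinuousLinearMap.mul_norm_le_sub_of_forall_mem_ball_lt {E : Type*}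
    [NormedAddCommGroup E] [NormedSpace ℝ E] (f : E →L[ℝ] ℝ) {b : E} {r c : ℝ} (hr : 0 < r)
    (h : ∀ x ∈ ball b r, f x < c) : r * ‖f‖ ≤ c - f b := by
  have hshift : ∀ y : E, ‖y‖ < 1 → r * f y < c - f b := fun y hy => by
    have := h (b + r • y) (by
      rw [mem_ball, dist_eq_norm, add_sub_cancel_left, norm_smul, Real.norm_of_nonneg hr.le]
      exact mul_lt_of_lt_one_right hr hy)
    rw [map_add, map_smul, smul_eq_mul] at this
    linarith
  by_contra! hlt
  obtain ⟨x, hx1, hx⟩ := f.exists_lt_apply_of_lt_opNorm ((div_lt_iff₀' hr).2 hlt)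
  rw [div_lt_iff₀' hr, Real.norm_eq_abs] at hx
  obtain ⟨y, hy1, hy⟩ : ∃ y : E, ‖y‖ < 1 ∧ f y = |f x| := by
    rcases abs_cases (f x) with ⟨hfx, _⟩ | ⟨hfx, _⟩
    · exact ⟨x, hx1, hfx.symm⟩
    · exact ⟨-x, by rwa [norm_neg], by rw [map_neg, hfx]⟩
  rw [← hy] at hx
  linarith [hshift y hy1]

section Hausdorff

variable {X : Type*} [NormedAddCommGroup X] [NormedSpace ℝ X] {A B : Set X}

lemma infDist_le_of_forall_apply_le_suppFn_add (hA : Convex ℝ A) (hAne : A.Nonempty) {b : X}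
    {ε : ℝ} (hε : 0 ≤ ε) (h : ∀ u : X →L[ℝ] ℝ, ‖u‖ = 1 → u b ≤ suppFn A u + ε) :
    infDist b A ≤ ε := by
  -- Separate `ball b r` (with `ε < r`) from `A` by `f < c` on the ball and `c ≤ f` on `A`:
  -- testing `h` on `-f / ‖f‖` gives `c - f b ≤ ε ‖f‖`, while the ball forces `r ‖f‖ ≤ c - f b`.
  by_contra! hlt
  obtain ⟨r, hεr, hrb⟩ := exists_between hlt
  have hr0 : 0 < r := hε.trans_lt hεr
  have hdisj : Disjoint (ball b r) A :=
    disjoint_ball_infDist.mono_left (ball_subset_ball hrb.le)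
  obtain ⟨f, c, hball, hfA⟩ := geometric_hahn_banach_open (convex_ball b r) isOpen_ball hA hdisj
  have hfb : f b < c := hball b (mem_ball_self hr0)
  have hf : 0 < ‖f‖ := by
    refine norm_pos_iff.2 fun hf0 => ?_
    obtain ⟨a, ha⟩ := hAne
    have := hfA a ha
    simp only [hf0, zero_apply] at hfb this
    linarith
  have hsep : c - f b ≤ ε * ‖f‖ := by
    set u : X →L[ℝ] ℝ := -(‖f‖⁻¹ • f)
    have hu : ‖u‖ = 1 := by
      rw [norm_neg, norm_smul, norm_inv, norm_norm, inv_mul_cancel₀ hf.ne']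
    have hsupp : suppFn A u ≤ -(‖f‖⁻¹ * c) := suppFn_le hAne fun a ha => by
      simpa [u] using mul_le_mul_of_nonneg_left (hfA a ha) (inv_nonneg.2 hf.le)
    have := h u hu
    simp only [u, neg_apply, smul_apply, smul_eq_mul] at this
    have h2 : ‖f‖⁻¹ * (c - f b) ≤ ε := by linarith
    rwa [inv_mul_le_iff₀ hf, mul_comm] at h2
  have hr : r * ‖f‖ ≤ c - f b := f.mul_norm_le_sub_of_forall_mem_ball_lt hr0 hball
  exact hεr.not_ge (le_of_mul_le_mul_right (hr.trans hsep) hf)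

lemma rhoBar_le_of_suppFn_le_add (hA : Convex ℝ A) (hAne : A.Nonempty) (hB : IsBounded B)
    {ε : ℝ} (hε : 0 ≤ ε) (h : ∀ u : X →L[ℝ] ℝ, ‖u‖ = 1 → suppFn B u ≤ suppFn A u + ε) :
    rhoBar A B ≤ ε := by
  rw [rhoBar_eq_iSup_infDist]
  exact Real.iSup_le (fun b => infDist_le_of_forall_apply_le_suppFn_add hA hAne hε fun u hu =>
    (le_suppFn hB b.2 u).trans (h u hu)) hε

lemma rhoH_le_of_abs_suppFn_sub_le (hA : Convex ℝ A) (hAne : A.Nonempty) (hAb : IsBounded A)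
    (hB : Convex ℝ B) (hBne : B.Nonempty) (hBb : IsBounded B) {ε : ℝ} (hε : 0 ≤ ε)
    (h : ∀ u : X →L[ℝ] ℝ, ‖u‖ = 1 → |suppFn A u - suppFn B u| ≤ ε) : rhoH A B ≤ ε :=
  max_le
    (rhoBar_le_of_suppFn_le_add hA hAne hBb hε fun u hu => by linarith [(abs_le.1 (h u hu)).1])
    (rhoBar_le_of_suppFn_le_add hB hBne hAb hε fun u hu => by linarith [(abs_le.1 (h u hu)).2])

lemma tendsto_rhoH_of_tendstoUniformlyOn {ι : Type*} {l : Filter ι} {A B : ι → Set X}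
    (hA : ∀ i, (A i).Nonempty ∧ IsBounded (A i) ∧ Convex ℝ (A i))
    (hB : ∀ i, (B i).Nonempty ∧ IsBounded (B i) ∧ Convex ℝ (B i))
    (h : TendstoUniformlyOn (fun i u => suppFn (A i) u - suppFn (B i) u) 0 l
      (sphere 0 1)) :
    Tendsto (fun i => rhoH (A i) (B i)) l (𝓝 0) := by
  refine Metric.tendsto_nhds.2 fun ε hε => ?_
  filter_upwards [tendstoUniformlyOn_iff.1 h (ε / 2) (half_pos hε)] with i hi
  rw [Real.dist_eq, sub_zero, abs_of_nonneg (rhoH_nonneg _ _)]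
  refine lt_of_le_of_lt ?_ (half_lt_self hε)
  refine rhoH_le_of_abs_suppFn_sub_le (hA i).2.2 (hA i).1 (hA i).2.1 (hB i).2.2 (hB i).1
    (hB i).2.1 (half_pos hε).le fun u hu => ?_
  rw [abs_sub_comm]
  simpa [Real.dist_eq] using (hi u (by simpa using hu)).le

lemma tendsto_rhoH_average_of_tendstoUniformlyOn {A B : ℕ → Set X}
    (hA : ∀ i, (A i).Nonempty ∧ IsBounded (A i) ∧ Convex ℝ (A i))
    (hB : ∀ i, (B i).Nonempty ∧ IsBounded (B i) ∧ Convex ℝ (B i))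
    (h : TendstoUniformlyOn
      (fun (n : ℕ) u => (n : ℝ)⁻¹ * ∑ i ∈ range n, (suppFn (A i) u - suppFn (B i) u)) 0 atTop
      (sphere 0 1)) :
    Tendsto (fun n : ℕ => rhoH ((n : ℝ)⁻¹ • ∑ i ∈ range n, A i) ((n : ℝ)⁻¹ • ∑ i ∈ range n, B i))
      atTop (𝓝 0) := by
  refine tendsto_rhoH_of_tendstoUniformlyOn
    (fun n => nonempty_isBounded_convex_smul_finsetSum _ fun i _ => hA i)
    (fun n => nonempty_isBounded_convex_smul_finsetSum _ fun i _ => hB i) ?_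
  convert h using 1
  ext n u
  rw [suppFn_smul_finsetSum (by positivity) (fun i _ => (hA i).1) (fun i _ => (hA i).2.1),
    suppFn_smul_finsetSum (by positivity) (fun i _ => (hB i).1) (fun i _ => (hB i).2.1),
    ← mul_sub, ← sum_sub_distrib]

end Hausdorff

section StrongLaw

variable {Ω : Type*} [MeasurableSpace Ω] {μ : Measure Ω}

lemma ae_tendsto_zero_of_summable_integral_sq {g : ℕ → Ω → ℝ} (hg : ∀ n, MemLp (g n) 2 μ)
    (hsum : Summable fun n => ∫ ω, g n ω ^ 2 ∂μ) :
    ∀ᵐ ω ∂μ, Tendsto (fun n => g n ω) atTop (𝓝 0) := by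
  have hnorm : ∀ n, eLpNorm (fun ω => g n ω ^ 2) 1 μ = ENNReal.ofReal (∫ ω, g n ω ^ 2 ∂μ) := by
    intro n
    rw [eLpNorm_one_eq_lintegral_enorm, ofReal_integral_eq_lintegral_ofReal (hg n).integrable_sq
      (Eventually.of_forall fun ω => sq_nonneg _)]
    refine lintegral_congr fun ω => ?_
    rw [Real.enorm_of_nonneg (sq_nonneg _)]
  have hae := summable_norm_of_tsum_eLpNorm_ne_top (f := fun n ω => g n ω ^ 2) le_rfl
    (fun n => (hg n).aestronglyMeasurable.pow 2) (by
      simp_rw [hnorm]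
      rw [← ENNReal.ofReal_tsum_of_nonneg (fun n => integral_nonneg fun ω => sq_nonneg _) hsum]
      exact ENNReal.ofReal_ne_top)
  filter_upwards [hae] with ω hω
  have hsq : Tendsto (fun n => ‖g n ω‖ ^ 2) atTop (𝓝 0) := by
    simpa only [norm_pow] using hω.tendsto_atTop_zero
  refine tendsto_zero_iff_norm_tendsto_zero.2 ?_
  simpa only [Real.sqrt_sq (norm_nonneg _), Real.sqrt_zero] using hsq.sqrt

lemma integral_sq_sum_le [IsProbabilityMeasure μ] {ι : Type*} {Y : ι → Ω → ℝ}
    (hm : ∀ i, Measurable (Y i)) (hi : iIndepFun Y μ) {K : ℝ} (hb : ∀ i ω, |Y i ω| ≤ K)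
    (h0 : ∀ i, ∫ ω, Y i ω ∂μ = 0) (s : Finset ι) :
    ∫ ω, (∑ i ∈ s, Y i ω) ^ 2 ∂μ ≤ #s * K ^ 2 := by
  have hmem : ∀ i, MemLp (Y i) 2 μ := fun i =>
    MemLp.of_bound (hm i).aestronglyMeasurable K (ae_of_all _ (hb i))
  have hmean : μ[∑ i ∈ s, Y i] = 0 := by
    simp only [Finset.sum_apply]
    rw [integral_finsetSum s fun i _ => (hmem i).integrable one_le_two]
    exact Finset.sum_eq_zero fun i _ => h0 i
  calc ∫ ω, (∑ i ∈ s, Y i ω) ^ 2 ∂μ = Var[∑ i ∈ s, Y i; μ] := by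
        rw [variance_of_integral_eq_zero
          (memLp_finsetSum' s fun i _ => hmem i).aestronglyMeasurable.aemeasurable hmean]
        simp only [Finset.sum_apply]
    _ = ∑ i ∈ s, Var[Y i; μ] :=
        IndepFun.variance_sum (fun i _ => hmem i) fun i _ j _ hij => hi.indepFun hij
    _ ≤ ∑ _i ∈ s, K ^ 2 := Finset.sum_le_sum fun i _ => by
        simpa using variance_le_sq_of_bounded (a := -K) (b := K)
          (ae_of_all _ fun ω => abs_le.1 (hb i ω)) (hm i).aemeasurable
    _ = #s * K ^ 2 := by simp

lemma abs_average_le_of_nat_sqrt {y : ℕ → ℝ} {K : ℝ} (hb : ∀ i, |y i| ≤ K) {m : ℕ} (hm : 0 < m) :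
    |(m : ℝ)⁻¹ * ∑ i ∈ range m, y i|
      ≤ |((m.sqrt ^ 2 : ℕ) : ℝ)⁻¹ * ∑ i ∈ range (m.sqrt ^ 2), y i| + 2 * K / m.sqrt := by
  set n := m.sqrt
  have hK : 0 ≤ K := (abs_nonneg _).trans (hb 0)
  have hn : (0 : ℝ) < n := Nat.cast_pos.2 (Nat.sqrt_pos.2 hm)
  have hnm : n ^ 2 ≤ m := Nat.sqrt_le' m
  have hnm' : ((n ^ 2 : ℕ) : ℝ) ≤ m := Nat.cast_le.2 hnm
  have hgap : ((m - n ^ 2 : ℕ) : ℝ) ≤ 2 * n := by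
    have h1 : m < (n + 1) ^ 2 := Nat.lt_succ_sqrt' m
    exact_mod_cast Nat.sub_le_iff_le_add.2 (by nlinarith : m ≤ 2 * n + n ^ 2)
  have htail : |∑ i ∈ Ico (n ^ 2) m, y i| ≤ 2 * n * K :=
    calc |∑ i ∈ Ico (n ^ 2) m, y i| ≤ ∑ i ∈ Ico (n ^ 2) m, K :=
          (abs_sum_le_sum_abs _ _).trans (sum_le_sum fun i _ => hb i)
      _ = ((m - n ^ 2 : ℕ) : ℝ) * K := by rw [sum_const, Nat.card_Ico, nsmul_eq_mul]
      _ ≤ 2 * n * K := by gcongr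
  rw [← sum_range_add_sum_Ico y hnm, mul_add]
  refine (abs_add_le _ _).trans (add_le_add ?_ ?_)
  · rw [abs_mul, abs_mul, abs_inv, abs_inv, Nat.abs_cast, Nat.abs_cast]
    gcongr
  · rw [abs_mul, abs_inv, Nat.abs_cast]
    calc (m : ℝ)⁻¹ * |∑ i ∈ Ico (n ^ 2) m, y i| ≤ ((n ^ 2 : ℕ) : ℝ)⁻¹ * (2 * n * K) := by
          gcongr
      _ = 2 * K / n := by field_simp; push_cast; ring

lemma tendsto_average_of_tendsto_average_sq {y : ℕ → ℝ} {K : ℝ} (hb : ∀ i, |y i| ≤ K)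
    (h : Tendsto (fun n => ((n ^ 2 : ℕ) : ℝ)⁻¹ * ∑ i ∈ range (n ^ 2), y i) atTop (𝓝 0)) :
    Tendsto (fun m : ℕ => (m : ℝ)⁻¹ * ∑ i ∈ range m, y i) atTop (𝓝 0) := by
  have hsqrt : Tendsto Nat.sqrt atTop atTop :=
    tendsto_atTop_atTop.2 fun b => ⟨b * b, fun m hm => Nat.le_sqrt.2 hm⟩
  have hbound := (h.abs.add (tendsto_const_div_atTop_nhds_zero_nat (2 * K))).comp hsqrt
  rw [abs_zero, zero_add] at hbound
  refine squeeze_zero_norm' ?_ hbound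
  filter_upwards [eventually_gt_atTop 0] with m hm
  exact abs_average_le_of_nat_sqrt hb hm

theorem strong_law_ae_of_bounded [IsProbabilityMeasure μ] {Y : ℕ → Ω → ℝ}
    (hm : ∀ i, Measurable (Y i)) (hi : iIndepFun Y μ) {K : ℝ} (hb : ∀ i ω, |Y i ω| ≤ K)
    (h0 : ∀ i, ∫ ω, Y i ω ∂μ = 0) :
    ∀ᵐ ω ∂μ, Tendsto (fun n : ℕ => (n : ℝ)⁻¹ * ∑ i ∈ range n, Y i ω) atTop (𝓝 0) := by
  set g : ℕ → Ω → ℝ := fun n ω => ((n ^ 2 : ℕ) : ℝ)⁻¹ * ∑ i ∈ range (n ^ 2), Y i ω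
  have hmem : ∀ n, MemLp (g n) 2 μ := fun n => by
    have hY : ∀ i, MemLp (Y i) 2 μ := fun i =>
      MemLp.of_bound (hm i).aestronglyMeasurable K (ae_of_all _ (hb i))
    exact (memLp_finsetSum (range (n ^ 2)) fun i _ => hY i).const_mul ((n ^ 2 : ℕ) : ℝ)⁻¹
  have hsq : ∀ n, ∫ ω, g n ω ^ 2 ∂μ ≤ K ^ 2 * ((n ^ 2 : ℕ) : ℝ)⁻¹ := fun n => by
    rcases Nat.eq_zero_or_pos n with rfl | hn
    · simp [g]
    have hn2 : (0 : ℝ) < ((n ^ 2 : ℕ) : ℝ) := by positivity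
    simp only [g, mul_pow, integral_const_mul]
    calc ((n ^ 2 : ℕ) : ℝ)⁻¹ ^ 2 * ∫ ω, (∑ i ∈ range (n ^ 2), Y i ω) ^ 2 ∂μ
        ≤ ((n ^ 2 : ℕ) : ℝ)⁻¹ ^ 2 * (#(range (n ^ 2)) * K ^ 2) := by
          gcongr
          exact integral_sq_sum_le hm hi hb h0 _
      _ = K ^ 2 * ((n ^ 2 : ℕ) : ℝ)⁻¹ := by rw [card_range]; field_simp
  have hsum : Summable fun n => ∫ ω, g n ω ^ 2 ∂μ := by
    refine Summable.of_nonneg_of_le (fun n => integral_nonneg fun ω => sq_nonneg _) hsq ?_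
    push_cast
    exact (Real.summable_nat_pow_inv.2 one_lt_two).mul_left _
  filter_upwards [ae_tendsto_zero_of_summable_integral_sq hmem hsum] with ω hω
  exact tendsto_average_of_tendsto_average_sq (fun i => hb i ω) hω

end StrongLaw

section RandomSets

variable {X : Type*} [NormedAddCommGroup X] [NormedSpace ℝ X]
  {Ω : Type*} [MeasurableSpace Ω] {μ : Measure Ω} [IsProbabilityMeasure μ]

lemma subset_closedBall_of_suppFn_eq_integral {Ψ : Ω → Set X} {U : Set X} {R : ℝ≥0}
    (hΨ : ∀ ω, (Ψ ω).Nonempty) (hΨR : ∀ ω, Ψ ω ⊆ closedBall 0 R) (hU : IsBounded U)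
    (hexp : ∀ f : X →L[ℝ] ℝ,
      Integrable (fun ω => suppFn (Ψ ω) f) μ ∧ ∫ ω, suppFn (Ψ ω) f ∂μ = suppFn U f) :
    U ⊆ closedBall 0 R :=
  subset_closedBall_of_suppFn_le R.2 hU fun f => by
    rw [← (hexp f).2]
    refine (integral_mono (hexp f).1 (integrable_const _) fun ω =>
      (le_abs_self _).trans (abs_suppFn_le (hΨ ω) (hΨR ω) f)).trans_eq ?_
    simp

theorem ae_tendsto_average_suppFn_sub {Ψ : ℕ → Ω → Set X} {U : ℕ → Set X} {R : ℝ≥0}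
    (hmeas : ∀ n, Measurable fun ω => Rad (Ψ n ω))
    (hindep : iIndepFun (fun n ω => Rad (Ψ n ω)) μ)
    (hΨ : ∀ n ω, (Ψ n ω).Nonempty) (hΨR : ∀ n ω, Ψ n ω ⊆ closedBall 0 R)
    (hU : ∀ n, (U n).Nonempty) (hUR : ∀ n, U n ⊆ closedBall 0 R)
    {f : X →L[ℝ] ℝ} (hf : ‖f‖ = 1)
    (hexp : ∀ n, Integrable (fun ω => suppFn (Ψ n ω) f) μ ∧
      ∫ ω, suppFn (Ψ n ω) f ∂μ = suppFn (U n) f) :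
    ∀ᵐ ω ∂μ, Tendsto (fun n : ℕ => (n : ℝ)⁻¹ * ∑ i ∈ range n, (suppFn (Ψ i ω) f - suppFn (U i) f))
      atTop (𝓝 0) := by
  -- `suppFn (Ψ i ·) f` is the coordinate `⟨f, hf⟩` of the Rådström embedding
  have hφ : ∀ i, Measurable fun v : DualSphere X → ℝ => v ⟨f, hf⟩ - suppFn (U i) f :=
    fun i => (measurable_pi_apply _).sub_const _
  refine strong_law_ae_of_bounded (fun i => (hφ i).comp (hmeas i)) (hindep.comp _ hφ)
    (K := R + R) (fun i ω => ?_) (fun i => ?_)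
  · calc |suppFn (Ψ i ω) f - suppFn (U i) f| ≤ |suppFn (Ψ i ω) f| + |suppFn (U i) f| :=
          abs_sub _ _
      _ ≤ R * ‖f‖ + R * ‖f‖ := add_le_add (abs_suppFn_le (hΨ i ω) (hΨR i ω) f)
          (abs_suppFn_le (hU i) (hUR i) f)
      _ = R + R := by rw [hf, mul_one]
  · show ∫ ω, (suppFn (Ψ i ω) f - suppFn (U i) f) ∂μ = 0
    rw [integral_sub (hexp i).1 (integrable_const _), (hexp i).2, integral_const]
    simp

end RandomSets

/-- full SLLN for random sets in finite dimensions: for a uniformly bounded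
independent sequence of random convex bounded sets `Ψ n` in a finite-dimensional Banach
space with expectations `U n` (via the Rådström embedding), the Hausdorff distance between
the averages of `Ψ i (ω)` and of `U i` tends to `0` almost everywhere. -/
theorem stmt14 {X : Type*} [NormedAddCommGroup X] [NormedSpace ℝ X] [FiniteDimensional ℝ X]
    {Ω : Type*} [MeasurableSpace Ω] (μ : Measure Ω) [IsProbabilityMeasure μ]
    (Ψ : ℕ → Ω → Set X)
    (hval : ∀ n ω, (Ψ n ω).Nonempty ∧ Bornology.IsBounded (Ψ n ω) ∧ Convex ℝ (Ψ n ω))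
    (hbdd : ∃ C : ℝ, ∀ n ω, Ψ n ω ⊆ Metric.closedBall (0 : X) C)
    (hmeas : ∀ n, Measurable fun ω => Rad (Ψ n ω))
    (hindep : ProbabilityTheory.iIndepFun
      (fun n ω => Rad (Ψ n ω)) μ)
    (U : ℕ → Set X)
    (hU : ∀ n, (U n).Nonempty ∧ Bornology.IsBounded (U n) ∧ Convex ℝ (U n))
    (hexp : ∀ n (f : X →L[ℝ] ℝ),
      Integrable (fun ω => suppFn (Ψ n ω) f) μ ∧
      ∫ ω, suppFn (Ψ n ω) f ∂μ = suppFn (U n) f) :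
    ∀ᵐ ω ∂μ, Filter.Tendsto
      (fun n : ℕ => rhoH (((n : ℝ))⁻¹ • ∑ i ∈ Finset.range n, Ψ i ω)
                         (((n : ℝ))⁻¹ • ∑ i ∈ Finset.range n, U i))
      Filter.atTop (nhds 0) := by
  obtain ⟨C, hC⟩ := hbdd
  have hΨR : ∀ n ω, Ψ n ω ⊆ closedBall 0 C.toNNReal := fun n ω =>
    (hC n ω).trans (closedBall_subset_closedBall (Real.le_coe_toNNReal C))
  have hUR : ∀ n, U n ⊆ closedBall 0 C.toNNReal := fun n =>
    subset_closedBall_of_suppFn_eq_integral (fun ω => (hval n ω).1) (hΨR n) (hU n).2.1 (hexp n)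
  obtain ⟨T, hTS, hTc, hST⟩ :=
    (isCompact_sphere (0 : X →L[ℝ] ℝ) 1).isSeparable.exists_countable_dense_subset
  have hae : ∀ᵐ ω ∂μ, ∀ t ∈ T, Tendsto (fun n : ℕ =>
      (n : ℝ)⁻¹ * ∑ i ∈ range n, (suppFn (Ψ i ω) t - suppFn (U i) t)) atTop (𝓝 0) :=
    (ae_ball_iff hTc).2 fun t ht => ae_tendsto_average_suppFn_sub hmeas hindep
      (fun n ω => (hval n ω).1) hΨR (fun n => (hU n).1) hUR (by simpa using hTS ht)
      fun n => hexp n t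
  filter_upwards [hae] with ω hω
  refine tendsto_rhoH_average_of_tendstoUniformlyOn (hval · ω) hU ?_
  refine tendstoUniformlyOn_of_lipschitzWith_of_subset_closure (K := C.toNNReal + C.toNNReal)
    (fun n => ?_) continuous_const (isCompact_sphere 0 1) hST hω
  simpa using lipschitzWith_average (s := range n) fun i _ =>
    (lipschitzWith_suppFn (hval i ω).1 (hΨR i ω)).sub (lipschitzWith_suppFn (hU i).1 (hUR i))
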